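/- Let A ∈ ℝ^{m×n}, b ∈ ℝ^m, λ > 0, and let x̄ be a solution of the SR-LASSO satisfying the intermediate assumption: Ax̄ ≠ b, and with ȳ := (b − Ax̄)/‖Ax̄ − b‖₂ and J := {i ∈ {1,…,n} : |Aᵢᵀȳ| = λ}, one has ker A_J = {0} and b ∉ range(A_J). Then x̄ is the unique solution of the SR-LASSO, the matrix A_Jᵀ(I − ȳȳᵀ)A_J is invertible, and x̄ = L_J( B A_Jᵀ(I − ȳȳᵀ) b ), where B := [A_Jᵀ(I − ȳȳᵀ)A_J]⁻¹. -/
import Mathlib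


open Matrix Filter Topology
open scoped BigOperators Classical

noncomputable def l2 {k : ℕ} (x : Fin k → ℝ) : ℝ := Real.sqrt (∑ i, (x i) ^ 2)

noncomputable def l1 {k : ℕ} (x : Fin k → ℝ) : ℝ := ∑ i, |x i|

noncomputable def linf {k : ℕ} (x : Fin k → ℝ) : ℝ := sSup (Set.range fun i => |x i|)

noncomputable def dotp {k : ℕ} (x y : Fin k → ℝ) : ℝ := ∑ i, x i * y i

noncomputable def pinv {m s : ℕ} (M : Matrix (Fin m) (Fin s) ℝ) :
    Matrix (Fin s) (Fin m) ℝ := (Mᵀ * M)⁻¹ * Mᵀ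

/-- The SR-LASSO objective f_{A,b,λ}(x) := ‖Ax − b‖₂ + λ‖x‖₁. -/
noncomputable def srObj {m n : ℕ} (A : Matrix (Fin m) (Fin n) ℝ) (b : Fin m → ℝ)
    (lam : ℝ) (x : Fin n → ℝ) : ℝ := l2 (A.mulVec x - b) + lam * l1 x

/-- x is a solution of the SR-LASSO with data (A, b, λ). -/
def IsSol {m n : ℕ} (A : Matrix (Fin m) (Fin n) ℝ) (b : Fin m → ℝ) (lam : ℝ)
    (x : Fin n → ℝ) : Prop := ∀ w : Fin n → ℝ, srObj A b lam x ≤ srObj A b lam w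

/-- y is feasible for the SR-LASSO dual: ‖Aᵀy‖_∞ ≤ λ and ‖y‖₂ ≤ 1. -/
noncomputable def DualFeas {m n : ℕ} (A : Matrix (Fin m) (Fin n) ℝ) (lam : ℝ)
    (y : Fin m → ℝ) : Prop := linf (Aᵀ.mulVec y) ≤ lam ∧ l2 y ≤ 1

/-- y is a solution of the SR-LASSO dual: it is feasible and maximizes ⟨b, ·⟩
over the feasible set. -/
noncomputable def IsDualSol {m n : ℕ} (A : Matrix (Fin m) (Fin n) ℝ) (b : Fin m → ℝ)
    (lam : ℝ) (y : Fin m → ℝ) : Prop :=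
  DualFeas A lam y ∧ ∀ y' : Fin m → ℝ, DualFeas A lam y' → dotp b y' ≤ dotp b y

/-- The submatrix of A consisting of the columns indexed by J (in increasing
order). -/
noncomputable def cols {m n : ℕ} (A : Matrix (Fin m) (Fin n) ℝ)
    (J : Finset (Fin n)) : Matrix (Fin m) (Fin J.card) ℝ :=
  Matrix.of fun r j => A r ((J.orderIsoOfFin rfl) j).1

/-- L_J(u): extend a vector indexed by J to ℝⁿ by zeros. -/
noncomputable def extendVec {n : ℕ} (J : Finset (Fin n)) (u : Fin J.card → ℝ) :
    Fin n → ℝ :=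
  fun i => if h : i ∈ J then u ((J.orderIsoOfFin rfl).symm ⟨i, h⟩) else 0

section basic
variable {k : ℕ} (x y : Fin k → ℝ)

lemma dotp_eq : dotp x y = x ⬝ᵥ y := rfl

lemma l2_nonneg : 0 ≤ l2 x := Real.sqrt_nonneg _

lemma l2_sq : l2 x ^ 2 = ∑ i, (x i) ^ 2 :=
  Real.sq_sqrt (Finset.sum_nonneg fun i _ => sq_nonneg _)

lemma dotp_self : dotp x x = l2 x ^ 2 := by
  rw [l2_sq]; simp [dotp, sq]

lemma dotp_self_nonneg : 0 ≤ dotp x x := by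
  rw [dotp_self]; positivity

lemma l2_eq_zero (h : l2 x = 0) : x = 0 := by
  have h2 : ∑ i, (x i) ^ 2 = 0 := by
    have := l2_sq x; rw [h] at this; linarith [this]
  funext i
  have := (Finset.sum_eq_zero_iff_of_nonneg (fun i _ => sq_nonneg (x i))).1 h2 i (Finset.mem_univ i)
  exact pow_eq_zero_iff (by norm_num) |>.1 this

lemma l2_pos (h : x ≠ 0) : 0 < l2 x :=
  lt_of_le_of_ne (l2_nonneg x) fun h' => h (l2_eq_zero x h'.symm)

lemma dotp_le_l2 : dotp x y ≤ l2 x * l2 y := by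
  have h := Finset.sum_mul_sq_le_sq_mul_sq Finset.univ x y
  have h2 : dotp x y ^ 2 ≤ (l2 x * l2 y) ^ 2 := by
    rw [mul_pow, l2_sq, l2_sq]; exact h
  have hnn : 0 ≤ l2 x * l2 y := mul_nonneg (l2_nonneg x) (l2_nonneg y)
  nlinarith [le_abs_self (dotp x y), sq_abs (dotp x y)]

lemma l2_smul (c : ℝ) : l2 (c • x) = |c| * l2 x := by
  unfold l2
  rw [← Real.sqrt_sq_eq_abs, ← Real.sqrt_mul (sq_nonneg c)]
  congr 1
  rw [Finset.mul_sum]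
  congr 1; funext i; simp [mul_pow]

lemma l2_neg : l2 (-x) = l2 x := by
  unfold l2; congr 1; congr 1; funext i; simp

end basic

section more
variable {k : ℕ}

lemma dotp_comm (x y : Fin k → ℝ) : dotp x y = dotp y x := by
  unfold dotp; congr 1; funext i; ring

/-- Equality case of Cauchy-Schwarz. -/
lemma cs_eq (u y : Fin k → ℝ) (hy : l2 y = 1) (h : dotp u y = l2 u) :
    u = l2 u • y := by
  have hyy : ∑ i, (y i)^2 = 1 := by rw [← l2_sq, hy]; norm_num
  have huu : ∑ i, (u i)^2 = l2 u ^ 2 := (l2_sq u).symm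
  have key : ∑ i, (u i - l2 u * y i)^2 = 0 := by
    have expand : ∑ i, (u i - l2 u * y i)^2
        = (∑ i, (u i)^2) - 2 * l2 u * (∑ i, u i * y i) + (l2 u)^2 * ∑ i, (y i)^2 := by
      rw [Finset.mul_sum, Finset.mul_sum, ← Finset.sum_sub_distrib, ← Finset.sum_add_distrib]
      congr 1; funext i; ring
    rw [expand, huu, hyy]
    have : (∑ i, u i * y i) = l2 u := h
    rw [this]; ring
  funext i
  have := (Finset.sum_eq_zero_iff_of_nonneg (fun i _ => sq_nonneg _)).1 key i (Finset.mem_univ i)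
  have : u i - l2 u * y i = 0 := by
    exact pow_eq_zero_iff (by norm_num) |>.1 this
  simp only [Pi.smul_apply, smul_eq_mul]
  linarith

/-- Key algebraic bound replacing differentiability of the norm. -/
lemma key_ineq (u v : Fin k → ℝ) (hu : u ≠ 0) :
    l2 (u + v) ≤ l2 u + (dotp u v + dotp v v) / l2 u := by
  set a := l2 u with ha
  have hapos : 0 < a := l2_pos u hu
  set c := dotp u v with hc
  set e := dotp v v with hev0
  have he : 0 ≤ e := dotp_self_nonneg v
  have hcs' : -c ≤ a * l2 v := by
    have := dotp_le_l2 u (-v)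
    have hne : dotp u (-v) = -c := by
      rw [hc]; unfold dotp; rw [← Finset.sum_neg_distrib]; congr 1; funext i; simp
    rw [hne, l2_neg] at this; exact this
  have hev : e = l2 v ^ 2 := dotp_self v
  have hlv : 0 ≤ l2 v := l2_nonneg v
  set s := (c + e) / a with hs
  have hsa : s * a = c + e := div_mul_cancel₀ _ (ne_of_gt hapos)
  have hRnn : 0 ≤ a + s := by
    have h1 : 0 ≤ a * a + c + e := by nlinarith [sq_nonneg (a - l2 v)]
    have : a + s = (a * a + c + e) / a := by rw [hs]; field_simp; ring
    rw [this]; positivity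
  have hsq : l2 (u + v) ^ 2 = a ^ 2 + 2 * c + e := by
    rw [← dotp_self]
    have : dotp (u + v) (u + v) = dotp u u + 2 * dotp u v + dotp v v := by
      unfold dotp; rw [← hc] at *
      simp only [Pi.add_apply]
      rw [Finset.mul_sum, ← Finset.sum_add_distrib, ← Finset.sum_add_distrib]
      congr 1; funext i; ring
    rw [this, dotp_self, ← hc, ← hev0]
  have hle : l2 (u + v) ^ 2 ≤ (a + s) ^ 2 := by nlinarith [sq_nonneg s]
  nlinarith [l2_nonneg (u + v)]

end more

section l1sec
variable {k : ℕ}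

lemma l1_nonneg (x : Fin k → ℝ) : 0 ≤ l1 x := Finset.sum_nonneg fun i _ => abs_nonneg _

lemma l1_add_le (x y : Fin k → ℝ) : l1 (x + y) ≤ l1 x + l1 y := by
  unfold l1
  rw [← Finset.sum_add_distrib]
  exact Finset.sum_le_sum fun i _ => abs_add_le _ _

lemma l1_smul (c : ℝ) (x : Fin k → ℝ) : l1 (c • x) = |c| * l1 x := by
  unfold l1
  rw [Finset.mul_sum]
  congr 1; funext i; simp [abs_mul]

lemma dotp_smul_left (c : ℝ) (x y : Fin k → ℝ) : dotp (c • x) y = c * dotp x y := by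
  unfold dotp; rw [Finset.mul_sum]; congr 1; funext i; simp; ring

lemma dotp_smul_right (c : ℝ) (x y : Fin k → ℝ) : dotp x (c • y) = c * dotp x y := by
  rw [dotp_comm, dotp_smul_left, dotp_comm]

lemma dotp_add_right (x y z : Fin k → ℝ) : dotp x (y + z) = dotp x y + dotp x z := by
  unfold dotp; rw [← Finset.sum_add_distrib]; congr 1; funext i; simp; ring

lemma dotp_sub_right (x y z : Fin k → ℝ) : dotp x (y - z) = dotp x y - dotp x z := by
  unfold dotp; rw [← Finset.sum_sub_distrib]; congr 1; funext i; simp; ring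

lemma dotp_neg_right (x y : Fin k → ℝ) : dotp x (-y) = - dotp x y := by
  unfold dotp; rw [← Finset.sum_neg_distrib]; congr 1; funext i; simp

end l1sec

/-- First-order optimality condition, algebraic form. -/
lemma first_order {m n : ℕ} {A : Matrix (Fin m) (Fin n) ℝ} {b : Fin m → ℝ} {lam : ℝ}
    {xbar : Fin n → ℝ} (hlam : 0 ≤ lam) (hsol : IsSol A b lam xbar) (hres : A.mulVec xbar ≠ b)
    {ybar : Fin m → ℝ}
    (hybar : ybar = (l2 (A.mulVec xbar - b))⁻¹ • (b - A.mulVec xbar))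
    (d : Fin n → ℝ) (c : ℝ)
    (hd : ∀ t : ℝ, 0 < t → t ≤ 1 → l1 (xbar + t • d) ≤ l1 xbar + t * c) :
    dotp ybar (A.mulVec d) ≤ lam * c := by
  set u := A.mulVec xbar - b with hu_def
  have hu : u ≠ 0 := sub_ne_zero.2 hres
  set r := l2 u with hr_def
  have hr : 0 < r := l2_pos u hu
  set w := A.mulVec d with hw_def
  have hyw : dotp ybar w = -(dotp u w) / r := by
    rw [hybar]
    have : b - A.mulVec xbar = -u := by rw [hu_def]; abel
    rw [this, dotp_smul_left]
    have h2 : dotp (-u) w = -(dotp u w) := by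
      rw [dotp_comm, dotp_neg_right, dotp_comm]
    rw [h2]; field_simp
  have step : ∀ t : ℝ, 0 < t → t ≤ 1 →
      0 ≤ t * (dotp u w / r + lam * c) + t ^ 2 * (dotp w w / r) := by
    intro t ht ht1
    have hobj := hsol (xbar + t • d)
    unfold srObj at hobj
    have hAv : A.mulVec (xbar + t • d) - b = u + t • w := by
      rw [Matrix.mulVec_add, Matrix.mulVec_smul, hu_def, hw_def]; abel
    rw [hAv] at hobj
    have hkey := key_ineq u (t • w) hu
    have h1 : dotp u (t • w) = t * dotp u w := dotp_smul_right t u w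
    have h2 : dotp (t • w) (t • w) = t ^ 2 * dotp w w := by
      rw [dotp_smul_left, dotp_smul_right]; ring
    rw [h1, h2, ← hr_def] at hkey
    have hl1 := hd t ht ht1
    have : r + lam * l1 xbar ≤ r + (t * dotp u w + t ^ 2 * dotp w w) / r + lam * (l1 xbar + t * c) := by
      calc r + lam * l1 xbar ≤ l2 (u + t • w) + lam * l1 (xbar + t • d) := hobj
        _ ≤ r + (t * dotp u w + t ^ 2 * dotp w w) / r + lam * (l1 xbar + t * c) := by
            have h5 := mul_le_mul_of_nonneg_left hl1 hlam
            linarith [hkey]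
    have hexp : (t * dotp u w + t ^ 2 * dotp w w) / r
        = t * (dotp u w / r) + t ^ 2 * (dotp w w / r) := by ring
    nlinarith [this]
  -- conclude the limit t → 0⁺
  have main : 0 ≤ dotp u w / r + lam * c := by
    by_contra hneg
    push_neg at hneg
    set δ := -(dotp u w / r + lam * c) with hδ
    have hδpos : 0 < δ := by simp [hδ]; linarith
    have hwwr : 0 ≤ dotp w w / r := div_nonneg (dotp_self_nonneg w) (le_of_lt hr)
    set t := min 1 (δ / (2 * (dotp w w / r + 1))) with htdef
    have htpos : 0 < t := by
      apply lt_min one_pos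
      positivity
    have ht1 : t ≤ 1 := min_le_left _ _
    have hst := step t htpos ht1
    have ht2 : t * (dotp w w / r) ≤ δ / 2 := by
      have h1 : t ≤ δ / (2 * (dotp w w / r + 1)) := min_le_right _ _
      have h2 : t * (dotp w w / r) ≤ (δ / (2 * (dotp w w / r + 1))) * (dotp w w / r) := by
        apply mul_le_mul_of_nonneg_right h1 hwwr
      have h3 : (δ / (2 * (dotp w w / r + 1))) * (dotp w w / r) ≤ δ / 2 := by
        rw [div_mul_eq_mul_div, div_le_div_iff₀ (by positivity) (by norm_num)]
        nlinarith
      linarith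
    have : 0 ≤ t * (-δ) + t ^ 2 * (dotp w w / r) := by
      have : dotp u w / r + lam * c = -δ := by rw [hδ]; ring
      rw [← this]; exact hst
    nlinarith
  rw [hyw]
  have : -(dotp u w) / r = -(dotp u w / r) := by ring
  rw [this]; linarith

lemma l1_single {k : ℕ} (i : Fin k) (s : ℝ) : l1 (Pi.single i s) = |s| := by
  unfold l1
  rw [Finset.sum_eq_single_of_mem i (Finset.mem_univ i)]
  · simp
  · intro j _ hji; simp [Pi.single_apply, hji]

lemma dotp_single {m n : ℕ} (A : Matrix (Fin m) (Fin n) ℝ) (y : Fin m → ℝ) (i : Fin n) (s : ℝ) :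
    dotp y (A.mulVec (Pi.single i s)) = s * (Aᵀ.mulVec y i) := by
  rw [Matrix.mulVec_single]
  unfold dotp
  have : Aᵀ.mulVec y i = ∑ r, A r i * y r := rfl
  rw [this, Finset.mul_sum]
  congr 1; funext r; simp; ring

section mainlemmas
variable {m n : ℕ} {A : Matrix (Fin m) (Fin n) ℝ} {b : Fin m → ℝ} {lam : ℝ}
    {xbar : Fin n → ℝ} {ybar : Fin m → ℝ}

lemma dual_feas (hlam : 0 ≤ lam) (hsol : IsSol A b lam xbar) (hres : A.mulVec xbar ≠ b)
    (hybar : ybar = (l2 (A.mulVec xbar - b))⁻¹ • (b - A.mulVec xbar)) :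
    ∀ i, |Aᵀ.mulVec ybar i| ≤ lam := by
  intro i
  have key : ∀ s : ℝ, |s| = 1 → dotp ybar (A.mulVec (Pi.single i s)) ≤ lam := by
    intro s hs
    have h := first_order hlam hsol hres hybar (Pi.single i s) 1 ?_
    · linarith [h]
    · intro t ht ht1
      have h6 : l1 (t • (Pi.single i s : Fin n → ℝ)) = t * 1 := by
        rw [l1_smul, l1_single, hs, abs_of_pos ht]
      calc l1 (xbar + t • (Pi.single i s : Fin n → ℝ))
          ≤ l1 xbar + l1 (t • (Pi.single i s : Fin n → ℝ)) := l1_add_le _ _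
        _ = l1 xbar + t * 1 := by rw [h6]
  have h1 := key 1 (by norm_num)
  have h2 := key (-1) (by norm_num)
  rw [dotp_single] at h1 h2
  rw [abs_le]; constructor <;> linarith

lemma l1_opt (hlam : 0 ≤ lam) (hsol : IsSol A b lam xbar) (hres : A.mulVec xbar ≠ b)
    (hybar : ybar = (l2 (A.mulVec xbar - b))⁻¹ • (b - A.mulVec xbar)) :
    lam * l1 xbar ≤ dotp ybar (A.mulVec xbar) := by
  have h := first_order hlam hsol hres hybar (-xbar) (-(l1 xbar)) ?_
  · rw [Matrix.mulVec_neg, dotp_neg_right] at h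
    linarith
  · intro t ht ht1
    have hxx : xbar + t • (-xbar) = (1 - t) • xbar := by
      funext j
      simp only [Pi.add_apply, Pi.smul_apply, Pi.neg_apply, smul_eq_mul]
      ring
    rw [hxx, l1_smul, abs_of_nonneg (by linarith : (0:ℝ) ≤ 1 - t)]
    ring_nf
    linarith [l1_nonneg xbar]

end mainlemmas

section mainlemmas2
variable {m n : ℕ} {A : Matrix (Fin m) (Fin n) ℝ} {b : Fin m → ℝ} {lam : ℝ}
    {xbar : Fin n → ℝ} {ybar : Fin m → ℝ}

lemma sol_props (hlam : 0 < lam) (hsol : IsSol A b lam xbar) (hres : A.mulVec xbar ≠ b)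
    (hybar : ybar = (l2 (A.mulVec xbar - b))⁻¹ • (b - A.mulVec xbar)) :
    ∀ x : Fin n → ℝ, IsSol A b lam x →
      (∀ i, x i ≠ 0 → |Aᵀ.mulVec ybar i| = lam) ∧
      b - A.mulVec x = l2 (b - A.mulVec x) • ybar := by
  have hlam' : 0 ≤ lam := le_of_lt hlam
  set r := l2 (A.mulVec xbar - b) with hr_def
  have hr : 0 < r := l2_pos _ (sub_ne_zero.2 hres)
  have hby : b - A.mulVec xbar = r • ybar := by
    rw [hybar, smul_smul, mul_inv_cancel₀ (ne_of_gt hr), one_smul]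
  have hl2swap : l2 (b - A.mulVec xbar) = r := by
    rw [hr_def, ← l2_neg (b - A.mulVec xbar), neg_sub]
  have hyy : dotp ybar ybar = 1 := by
    rw [hybar, dotp_smul_left, dotp_smul_right, dotp_self, hl2swap]
    field_simp
  have hl2y : l2 ybar = 1 := by
    have h := dotp_self ybar
    rw [hyy] at h
    have h2 : (l2 ybar - 1) * (l2 ybar + 1) = 0 := by nlinarith
    rcases mul_eq_zero.1 h2 with h3 | h3
    · linarith
    · linarith [l2_nonneg ybar]
  set g := Aᵀ.mulVec ybar with hg_def
  have hg : ∀ i, |g i| ≤ lam := dual_feas hlam' hsol hres hybar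
  have hybr : dotp ybar (b - A.mulVec xbar) = r := by
    rw [hby, dotp_smul_right, hyy, mul_one]
  have hstrong : srObj A b lam xbar ≤ dotp ybar b := by
    have h1 := l1_opt hlam' hsol hres hybar
    have h2 : dotp ybar b = dotp ybar (b - A.mulVec xbar) + dotp ybar (A.mulVec xbar) := by
      rw [dotp_sub_right]; ring
    unfold srObj
    rw [h2, hybr]
    linarith
  intro x hx
  have hobj : srObj A b lam x = srObj A b lam xbar := le_antisymm (hx xbar) (hsol x)
  have hAxg : dotp ybar (A.mulVec x) = ∑ i, g i * x i := by
    rw [dotp_eq, Matrix.dotProduct_mulVec, ← Matrix.mulVec_transpose]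
    rfl
  have hsplit : dotp ybar b = dotp ybar (b - A.mulVec x) + ∑ i, g i * x i := by
    rw [dotp_sub_right, ← hAxg]; ring
  have hp : dotp ybar (b - A.mulVec x) ≤ l2 (b - A.mulVec x) := by
    rw [dotp_comm]
    calc dotp (b - A.mulVec x) ybar ≤ l2 (b - A.mulVec x) * l2 ybar := dotp_le_l2 _ _
      _ = l2 (b - A.mulVec x) := by rw [hl2y, mul_one]
  have hterm : ∀ i, g i * x i ≤ lam * |x i| := by
    intro i
    calc g i * x i ≤ |g i * x i| := le_abs_self _
      _ = |g i| * |x i| := abs_mul _ _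
      _ ≤ lam * |x i| := mul_le_mul_of_nonneg_right (hg i) (abs_nonneg _)
  have hq : ∑ i, g i * x i ≤ lam * l1 x := by
    unfold l1; rw [Finset.mul_sum]
    exact Finset.sum_le_sum fun i _ => hterm i
  have hl2eq : l2 (b - A.mulVec x) = l2 (A.mulVec x - b) := by
    rw [← l2_neg (b - A.mulVec x), neg_sub]
  have hpeq : dotp ybar (b - A.mulVec x) = l2 (b - A.mulVec x) := by
    have h1 : srObj A b lam x = l2 (A.mulVec x - b) + lam * l1 x := rfl
    have h2 : srObj A b lam x ≤ dotp ybar b := by rw [hobj]; exact hstrong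
    linarith [hsplit ▸ h2, hq, hl2eq]
  have hqeq : ∑ i, g i * x i = lam * l1 x := by
    have h1 : srObj A b lam x = l2 (A.mulVec x - b) + lam * l1 x := rfl
    have h2 : srObj A b lam x ≤ dotp ybar b := by rw [hobj]; exact hstrong
    linarith [hsplit ▸ h2, hp, hl2eq]
  constructor
  · -- support condition
    have hzero : ∑ i, (lam * |x i| - g i * x i) = 0 := by
      rw [Finset.sum_sub_distrib, ← Finset.mul_sum]
      have : ∑ i, |x i| = l1 x := rfl
      rw [this, hqeq]; ring
    have heach := (Finset.sum_eq_zero_iff_of_nonneg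
      (fun i _ => by linarith [hterm i] : ∀ i ∈ Finset.univ, 0 ≤ lam * |x i| - g i * x i)).1 hzero
    intro i hxi
    have h1 : lam * |x i| = g i * x i := by
      have := heach i (Finset.mem_univ i); linarith
    have h2 : g i * x i ≤ |g i| * |x i| := by
      calc g i * x i ≤ |g i * x i| := le_abs_self _
        _ = |g i| * |x i| := abs_mul _ _
    have hxpos : 0 < |x i| := abs_pos.2 hxi
    have h3 : lam ≤ |g i| := by
      have := h1 ▸ h2
      nlinarith
    linarith [hg i]
  · -- residual collinearity
    have := cs_eq (b - A.mulVec x) ybar hl2y (by rw [← hpeq, dotp_comm])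
    exact this

end mainlemmas2

lemma dotp_sub_left {k : ℕ} (x y z : Fin k → ℝ) : dotp (x - y) z = dotp x z - dotp y z := by
  rw [dotp_comm, dotp_sub_right, dotp_comm z x, dotp_comm z y]

lemma dotp_self_zero {k : ℕ} (v : Fin k → ℝ) (h : dotp v v = 0) : v = 0 := by
  have h2 := dotp_self v
  rw [h] at h2
  have h3 : l2 v = 0 := by
    have := l2_nonneg v; nlinarith
  exact l2_eq_zero v h3

section linalg
variable {m n : ℕ} (A : Matrix (Fin m) (Fin n) ℝ) (J : Finset (Fin n))

lemma extend_notMem (u : Fin J.card → ℝ) (i : Fin n) (h : i ∉ J) : extendVec J u i = 0 :=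
  dif_neg h

lemma extend_mem (u : Fin J.card → ℝ) (j : Fin J.card) :
    extendVec J u ((J.orderIsoOfFin rfl j : Fin n)) = u j := by
  unfold extendVec
  rw [dif_pos (J.orderIsoOfFin rfl j).2]
  congr 1
  have h1 : (⟨((J.orderIsoOfFin rfl) j : Fin n), (J.orderIsoOfFin rfl j).2⟩ : {x // x ∈ J})
      = J.orderIsoOfFin rfl j := Subtype.ext rfl
  rw [h1, OrderIso.symm_apply_apply]

lemma mulVec_extend (u : Fin J.card → ℝ) :
    A.mulVec (extendVec J u) = (cols A J).mulVec u := by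
  funext rr
  show ∑ i, A rr i * extendVec J u i = ∑ j, cols A J rr j * u j
  rw [← Finset.sum_subset (Finset.subset_univ J)
    (fun i _ hiJ => by rw [extend_notMem J u i hiJ, mul_zero])]
  rw [← Finset.sum_coe_sort J (fun i => A rr i * extendVec J u i)]
  rw [← Equiv.sum_comp (J.orderIsoOfFin rfl).toEquiv
    (fun a : {x // x ∈ J} => A rr a.1 * extendVec J u a.1)]
  congr 1; funext j
  simp only [RelIso.coe_fn_toEquiv]
  rw [extend_mem J u j]
  rfl

lemma extend_restr (x : Fin n → ℝ) (hx : ∀ i, i ∉ J → x i = 0) :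
    extendVec J (fun j => x (J.orderIsoOfFin rfl j : Fin n)) = x := by
  funext i
  unfold extendVec
  by_cases h : i ∈ J
  · rw [dif_pos h]
    show x ((J.orderIsoOfFin rfl) ((J.orderIsoOfFin rfl).symm ⟨i, h⟩) : Fin n) = x i
    rw [(J.orderIsoOfFin rfl).apply_symm_apply ⟨i, h⟩]
  · rw [dif_neg h, hx i h]

end linalg

/-- analytic solution formula under the intermediate
assumption: x̄ is the unique solution, A_Jᵀ(I − ȳȳᵀ)A_J is invertible, and
x̄ = L_J(B A_Jᵀ(I − ȳȳᵀ) b) with B := [A_Jᵀ(I − ȳȳᵀ)A_J]⁻¹. -/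
theorem stmt_11 {m n : ℕ} (A : Matrix (Fin m) (Fin n) ℝ) (b : Fin m → ℝ)
    (lam : ℝ) (hlam : 0 < lam) (xbar : Fin n → ℝ)
    (hsol : IsSol A b lam xbar) (hres : A.mulVec xbar ≠ b)
    (ybar : Fin m → ℝ)
    (hybar : ybar = (l2 (A.mulVec xbar - b))⁻¹ • (b - A.mulVec xbar))
    (J : Finset (Fin n))
    (hJ : J = Finset.univ.filter (fun i => |Aᵀ.mulVec ybar i| = lam))
    -- ker A_J = {0}:
    (hkerJ : ∀ u : Fin n → ℝ, (∀ i, i ∉ J → u i = 0) → A.mulVec u = 0 → u = 0)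
    -- b ∉ rge A_J:
    (hrgeJ : ¬ ∃ u : Fin n → ℝ, (∀ i, i ∉ J → u i = 0) ∧ A.mulVec u = b) :
    (∀ x : Fin n → ℝ, IsSol A b lam x → x = xbar) ∧
    IsUnit ((cols A J)ᵀ * (1 - vecMulVec ybar ybar) * cols A J) ∧
    xbar = extendVec J
        ((((cols A J)ᵀ * (1 - vecMulVec ybar ybar) * cols A J)⁻¹).mulVec
          ((cols A J)ᵀ.mulVec ((1 - vecMulVec ybar ybar).mulVec b))) := by
  set C := cols A J with hC
  set P := (1 : Matrix (Fin m) (Fin m) ℝ) - vecMulVec ybar ybar with hP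
  set M := Cᵀ * P * C with hM
  set r := l2 (A.mulVec xbar - b) with hr_def
  have hr : 0 < r := l2_pos _ (sub_ne_zero.2 hres)
  have hby : b - A.mulVec xbar = r • ybar := by
    rw [hybar, smul_smul, mul_inv_cancel₀ (ne_of_gt hr), one_smul]
  have hl2swap : l2 (b - A.mulVec xbar) = r := by
    rw [hr_def, ← l2_neg (b - A.mulVec xbar), neg_sub]
  have hyy : dotp ybar ybar = 1 := by
    rw [hybar, dotp_smul_left, dotp_smul_right, dotp_self, hl2swap]
    field_simp
  have hprops := sol_props hlam hsol hres hybar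
  have hsupp : ∀ x, IsSol A b lam x → ∀ i, i ∉ J → x i = 0 := by
    intro x hx i hiJ
    by_contra hne
    apply hiJ
    rw [hJ]
    simp only [Finset.mem_filter, Finset.mem_univ, true_and]
    exact (hprops x hx).1 i hne
  -- action of P
  have hPv : ∀ v, P.mulVec v = v - (dotp ybar v) • ybar := by
    intro v
    funext i
    rw [hP, Matrix.sub_mulVec, Matrix.one_mulVec]
    have h1 : Matrix.mulVec (vecMulVec ybar ybar) v i = ∑ j, ybar i * (ybar j * v j) := by
      show ∑ j, vecMulVec ybar ybar i j * v j = _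
      refine Finset.sum_congr rfl fun j _ => ?_
      rw [Matrix.vecMulVec_apply]; ring
    simp only [Pi.sub_apply, Pi.smul_apply, smul_eq_mul]
    rw [h1, ← Finset.mul_sum]
    have h2 : ∑ j, ybar j * v j = dotp ybar v := rfl
    rw [h2]; ring
  have hPy : P.mulVec ybar = 0 := by
    rw [hPv, hyy, one_smul, sub_self]
  -- adjoint
  have hadj : ∀ (z : Fin J.card → ℝ) (y : Fin m → ℝ),
      dotp z (Cᵀ.mulVec y) = dotp (C.mulVec z) y := by
    intro z y
    rw [dotp_eq, dotp_eq, Matrix.mulVec_transpose, dotProduct_comm z,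
      dotProduct_comm (C.mulVec z) y, Matrix.dotProduct_mulVec]
  have hMv : ∀ z, M.mulVec z = Cᵀ.mulVec (P.mulVec (C.mulVec z)) := by
    intro z
    rw [hM, Matrix.mul_assoc, ← Matrix.mulVec_mulVec, ← Matrix.mulVec_mulVec]
  -- injectivity of M
  have hMinj : ∀ z, M.mulVec z = 0 → z = 0 := by
    intro z hz
    set w := C.mulVec z with hw
    have h0 : dotp w (P.mulVec w) = 0 := by
      have h1 : dotp z (M.mulVec z) = 0 := by rw [hz]; simp [dotp]
      rw [hMv, hadj] at h1
      exact h1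
    rw [hPv] at h0
    set cc := dotp ybar w with hcc
    have hwy : dotp w ybar = cc := by rw [hcc, dotp_comm]
    have h2 : dotp w w = cc * cc := by
      rw [dotp_sub_right, dotp_smul_right, hwy] at h0; linarith
    have h3 : dotp (w - cc • ybar) (w - cc • ybar) = 0 := by
      simp only [dotp_sub_right, dotp_sub_left, dotp_smul_right, dotp_smul_left]
      rw [hyy, dotp_comm ybar w, hwy, h2]; ring
    have hwc : w = cc • ybar := by
      have := dotp_self_zero _ h3
      exact sub_eq_zero.1 this
    by_cases hc0 : cc = 0
    · -- w = 0, use kernel condition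
      rw [hc0, zero_smul] at hwc
      have hA0 : A.mulVec (extendVec J z) = 0 := by
        rw [mulVec_extend, ← hC, ← hw, hwc]
      have hez := hkerJ (extendVec J z) (fun i hi => extend_notMem J z i hi) hA0
      funext j
      have := extend_mem J z j
      rw [hez] at this
      exact (this.symm : z j = 0)
    · -- ybar in range of C: contradiction with b ∉ rge
      exfalso
      apply hrgeJ
      refine ⟨xbar + extendVec J ((r * cc⁻¹) • z), ?_, ?_⟩
      · intro i hi
        rw [Pi.add_apply, hsupp xbar hsol i hi, extend_notMem J _ i hi, add_zero]
      · rw [Matrix.mulVec_add, mulVec_extend, ← hC, Matrix.mulVec_smul, ← hw, hwc,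
          smul_smul, mul_assoc, inv_mul_cancel₀ hc0, mul_one, ← hby]
        abel
  -- determinant nonzero, invertibility
  have hdet : M.det ≠ 0 := by
    intro hdet0
    obtain ⟨v, hv0, hv⟩ := Matrix.exists_mulVec_eq_zero_iff.2 hdet0
    exact hv0 (hMinj v hv)
  have hunit : IsUnit M := (Matrix.isUnit_iff_isUnit_det M).2 (isUnit_iff_ne_zero.2 hdet)
  have hInv : M⁻¹ * M = 1 := Matrix.nonsing_inv_mul M (isUnit_iff_ne_zero.2 hdet)
  -- the normal equations, for any solution
  have hnormal : ∀ x, IsSol A b lam x →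
      M.mulVec (fun j => x (J.orderIsoOfFin rfl j : Fin n)) = Cᵀ.mulVec (P.mulVec b) := by
    intro x hx
    set z := fun j => x (J.orderIsoOfFin rfl j : Fin n) with hz
    have hxz : extendVec J z = x := extend_restr J x (hsupp x hx)
    have hAx : A.mulVec x = C.mulVec z := by
      rw [← hxz, mulVec_extend]
    have hresid := (hprops x hx).2
    have hCz : C.mulVec z = b - l2 (b - A.mulVec x) • ybar := by
      rw [← hAx, ← hresid]
      abel
    rw [hMv, hCz, Matrix.mulVec_sub, Matrix.mulVec_smul, hPy, smul_zero, sub_zero]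
  have hzbar_eq : (fun j => xbar (J.orderIsoOfFin rfl j : Fin n))
      = M⁻¹.mulVec (Cᵀ.mulVec (P.mulVec b)) := by
    rw [← hnormal xbar hsol, Matrix.mulVec_mulVec, hInv, Matrix.one_mulVec]
  refine ⟨?_, hunit, ?_⟩
  · -- uniqueness
    intro x hx
    set z := fun j => x (J.orderIsoOfFin rfl j : Fin n) with hz
    set zbar := fun j => xbar (J.orderIsoOfFin rfl j : Fin n) with hzb
    have hdiff : M.mulVec (z - zbar) = 0 := by
      rw [Matrix.mulVec_sub, hnormal x hx, hnormal xbar hsol, sub_self]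
    have hzz : z = zbar := sub_eq_zero.1 (hMinj _ hdiff)
    have h1 : extendVec J z = x := extend_restr J x (hsupp x hx)
    have h2 : extendVec J zbar = xbar := extend_restr J xbar (hsupp xbar hsol)
    rw [← h1, hzz, h2]
  · -- formula
    rw [← hzbar_eq]
    exact (extend_restr J xbar (hsupp xbar hsol)).symm
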